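/- arXiv:2310.11720 — 5 statements merged into one kernel-verified Lean document; each statement's English description precedes it below -/
import Mathlib

section
/- Let γ₊ > γ₋ > 0 and set a₀ = √(γ₋/γ₊), sin θ₀ = a₀. Fix x ∈ ℝ³ with x₃ < 0 and z' ∈ ℝ² with |x' - z'| ≥ a₀ |x - z̃'| (where z̃' = (z', 0)). Let z₀' be the point on the segment from x' to z' with |x' - z₀'|/|x - z̃₀'| = sin θ₀ and |x' - z'| = |x' - z₀'| + |z₀' - z'|. Then |x - z̃₀'| + a₀|z₀' - z'| ≤ |x - z̃'|, with equality only if z' = z₀'. -/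
open MeasureTheory Real

noncomputable section

local notation "E3" => EuclideanSpace ℝ (Fin 3)

/-- The horizontal projection `x ↦ x̃' = (x₁, x₂, 0)` onto the plane `{x₃ = 0}`. -/
def horiz (x : E3) : E3 := x - x 2 • EuclideanSpace.single (2 : Fin 3) (1 : ℝ)

lemma aux_pyth (w : E3) (c : ℝ) (hw : w 2 = 0) :
    ‖w + c • EuclideanSpace.single (2 : Fin 3) (1 : ℝ)‖ ^ 2 = ‖w‖ ^ 2 + c ^ 2 := by
  have hinner : (inner ℝ w (c • EuclideanSpace.single (2 : Fin 3) (1 : ℝ)) : ℝ) = 0 := by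
    rw [inner_smul_right, EuclideanSpace.inner_single_right]
    simp [hw]
  have := norm_add_sq_real w (c • EuclideanSpace.single (2 : Fin 3) (1 : ℝ))
  rw [hinner] at this
  rw [this]
  have : ‖c • EuclideanSpace.single (2 : Fin 3) (1 : ℝ)‖ = |c| := by
    rw [norm_smul, EuclideanSpace.norm_single]
    simp
  rw [this, sq_abs]; ring

lemma aux_pyth' (y x : E3) (hy : y 2 = 0) :
    ‖y - x‖ ^ 2 = ‖y - horiz x‖ ^ 2 + (x 2) ^ 2 := by
  have hw : (y - horiz x) 2 = 0 := by
    simp [horiz, hy, EuclideanSpace.single_apply]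
  have hdecomp : y - x = (y - horiz x) + (-(x 2)) • EuclideanSpace.single (2 : Fin 3) (1 : ℝ) := by
    rw [horiz]; module
  rw [hdecomp, aux_pyth _ _ hw, neg_pow]; ring

theorem stmt5 (γp γm : ℝ) (hγm : 0 < γm) (hγ : γm < γp)
    (a₀ : ℝ) (ha₀ : a₀ = Real.sqrt (γm / γp))
    (x z z₀ : E3) (hx : x 2 < 0) (hz : z 2 = 0) (hz₀ : z₀ 2 = 0)
    (hbig : a₀ * ‖z - x‖ ≤ ‖z - horiz x‖)
    (hseg : z₀ ∈ segment ℝ (horiz x) z)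
    (hcrit : ‖z₀ - horiz x‖ = a₀ * ‖z₀ - x‖)
    (hadd : ‖z - horiz x‖ = ‖z₀ - horiz x‖ + ‖z - z₀‖) :
    ‖z₀ - x‖ + a₀ * ‖z - z₀‖ ≤ ‖z - x‖ ∧
      (‖z₀ - x‖ + a₀ * ‖z - z₀‖ = ‖z - x‖ → z = z₀) := by
  have hγp : 0 < γp := hγm.trans hγ
  have ha0 : 0 ≤ a₀ := ha₀ ▸ Real.sqrt_nonneg _
  have ha2 : a₀ ^ 2 = γm / γp := by
    rw [ha₀, sq, Real.mul_self_sqrt (le_of_lt (div_pos hγm hγp))]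
  have ha1 : a₀ ^ 2 < 1 := by
    rw [ha2]; exact (div_lt_one hγp).mpr hγ
  set A := ‖z₀ - x‖ with hA
  set v := ‖z - z₀‖ with hv
  set N := ‖z - x‖ with hN
  have hAeq : A ^ 2 = (a₀ * A) ^ 2 + (x 2) ^ 2 := by
    rw [hA, aux_pyth' z₀ x hz₀, ← hcrit]
  have hNeq : N ^ 2 = (a₀ * A + v) ^ 2 + (x 2) ^ 2 := by
    rw [hN, aux_pyth' z x hz, hadd, hcrit]
  have hdiff : N ^ 2 - (A + a₀ * v) ^ 2 = (1 - a₀ ^ 2) * v ^ 2 := by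
    linear_combination hNeq - hAeq
  have hvnn : 0 ≤ v := norm_nonneg _
  have hAnn : 0 ≤ A := norm_nonneg _
  have hNnn : 0 ≤ N := norm_nonneg _
  have hineq : A + a₀ * v ≤ N := by
    nlinarith [sq_nonneg v, mul_nonneg ha0 hvnn]
  refine ⟨hineq, fun heq => ?_⟩
  have h0 : (1 - a₀ ^ 2) * v ^ 2 = 0 := by rw [← hdiff, heq]; ring
  have hv0 : v = 0 := by
    have := (mul_eq_zero.mp h0).resolve_left (by linarith)
    exact pow_eq_zero_iff (by norm_num) |>.mp this
  exact sub_eq_zero.mp (norm_eq_zero.mp hv0)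
end
end

section
/- Let γ₊ > γ₋ > 0, a₀ = √(γ₋/γ₊), cos θ₀ = √(1 - a₀²). For x ∈ ℝ³ with x₃ < 0 and y ∈ ℝ³ with y₃ > 0, define l̃_{x,y}(z') = l_{x,y}(z') if |x' - z'| < a₀|x - z̃'|, and l̃_{x,y}(z') = |x₃| cos θ₀/√γ₋ + (|x' - z'| + |z̃' - y|)/√γ₊ otherwise. Then inf_{z' ∈ ℝ²} l̃_{x,y}(z') = inf_{z' ∈ ℝ²} l_{x,y}(z') = l(x,y), and the infimum of l̃_{x,y} is attained only at the unique minimizer z'(x,y) of l_{x,y}. -/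
open MeasureTheory Real

noncomputable section

local notation "E3" => EuclideanSpace ℝ (Fin 3)

/-- The plane `{x₃ = 0}`, identified with `ℝ²` via `z' ↦ z̃' = (z', 0)`. -/
def plane : Set E3 := {w | w 2 = 0}

/-- The travel time `l_{x,y}(z') = |z̃' - x|/√γ₋ + |z̃' - y|/√γ₊` of the broken ray
`x → z̃' → y`. -/
def ltime (γm γp : ℝ) (x y z : E3) : ℝ :=
  ‖z - x‖ / Real.sqrt γm + ‖z - y‖ / Real.sqrt γp

/-- Orthogonal decomposition of norms along the vertical direction. -/
lemma norm_sq_decomp (u : E3) (hu : u 2 = 0) (t : ℝ) :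
    ‖u - t • EuclideanSpace.single (2 : Fin 3) (1 : ℝ)‖ ^ 2 = ‖u‖ ^ 2 + t ^ 2 := by
  have h1 : (inner ℝ u (t • EuclideanSpace.single (2 : Fin 3) (1 : ℝ)) : ℝ) = 0 := by
    rw [real_inner_smul_right, EuclideanSpace.inner_single_right]
    simp [hu]
  rw [norm_sub_sq_real, h1, norm_smul, EuclideanSpace.norm_single]
  simp [mul_pow, sq_abs]

set_option maxHeartbeats 1600000 in
/-- For `γ₊ > γ₋`, the modified travel time `l̃_{x,y}` (accounting for evanescent waves)
has the same infimum over the plane as `l_{x,y}`, attained only at the unique minimizer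
`z'(x,y)` of `l_{x,y}`. -/
theorem stmt9 (γp γm : ℝ) (hγm : 0 < γm) (hγ : γm < γp)
    (a₀ : ℝ) (ha₀ : a₀ = Real.sqrt (γm / γp))
    (x y : E3) (hx : x 2 < 0) (hy : 0 < y 2)
    (lt : E3 → ℝ)
    (hlt : ∀ z, lt z =
      if ‖z - horiz x‖ < a₀ * ‖z - x‖ then ltime γm γp x y z
      else |x 2| * Real.sqrt (1 - a₀ ^ 2) / Real.sqrt γm
            + (‖z - horiz x‖ + ‖z - y‖) / Real.sqrt γp)
    (zm : E3) (hzm : zm ∈ plane) (hmin : IsMinOn (ltime γm γp x y) plane zm)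
    (huniq : ∀ w ∈ plane, IsMinOn (ltime γm γp x y) plane w → w = zm) :
    IsMinOn lt plane zm ∧ lt zm = ltime γm γp x y zm ∧
      ∀ z ∈ plane, lt z = ltime γm γp x y zm → z = zm := by
  have hγp : 0 < γp := hγm.trans hγ
  have hsm : (0 : ℝ) < Real.sqrt γm := Real.sqrt_pos.2 hγm
  have hsp : (0 : ℝ) < Real.sqrt γp := Real.sqrt_pos.2 hγp
  have ha₀' : a₀ * Real.sqrt γp = Real.sqrt γm := by
    rw [ha₀, Real.sqrt_div hγm.le, div_mul_cancel₀ _ hsp.ne']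
  have ha₀pos : 0 < a₀ := by rw [ha₀]; positivity
  have ha₀lt : a₀ < 1 := by
    have h1 : γm / γp < 1 := (div_lt_one hγp).2 hγ
    have := Real.sqrt_lt_sqrt (le_of_lt (div_pos hγm hγp)) h1
    rwa [Real.sqrt_one, ← ha₀] at this
  set c : ℝ := Real.sqrt (1 - a₀ ^ 2) with hcdef
  have hc2 : c ^ 2 = 1 - a₀ ^ 2 := Real.sq_sqrt (by nlinarith)
  have hcpos : 0 < c := Real.sqrt_pos.2 (by nlinarith)
  set h : ℝ := -(x 2) with hhdef
  have hhpos : 0 < h := by simp [hhdef]; linarith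
  have habs : |x 2| = h := abs_of_neg hx
  have hh2 : (horiz x) 2 = 0 := by
    simp [horiz, EuclideanSpace.single_apply]
  have hzx : ∀ z : E3, z - x = (z - horiz x) - (x 2) • EuclideanSpace.single (2 : Fin 3) (1 : ℝ) := by
    intro z; unfold horiz; abel
  have hdiff2 : ∀ z : E3, z ∈ plane → (z - horiz x) 2 = 0 := by
    intro z hz
    have : z 2 = 0 := hz
    simp [hh2, this]
  have hnormzx : ∀ z ∈ plane, ‖z - x‖ ^ 2 = ‖z - horiz x‖ ^ 2 + h ^ 2 := by
    intro z hz
    rw [hzx z, norm_sq_decomp _ (hdiff2 z hz)]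
    simp [hhdef]
  -- the key pointwise analysis
  have main : ∀ z ∈ plane,
      ltime γm γp x y zm ≤ lt z ∧
      (lt z = ltime γm γp x y zm → z = zm) ∧
      (¬ (‖z - horiz x‖ < a₀ * ‖z - x‖) → lt z ≤ ltime γm γp x y z) := by
    intro z hz
    by_cases hcond : ‖z - horiz x‖ < a₀ * ‖z - x‖
    · have hzval : lt z = ltime γm γp x y z := by rw [hlt z, if_pos hcond]
      refine ⟨?_, ?_, fun hn => (hn hcond).elim⟩
      · rw [hzval]; exact isMinOn_iff.1 hmin z hz
      · intro heq
        rw [hzval] at heq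
        refine huniq z hz (isMinOn_iff.2 fun v hv => ?_)
        rw [heq]; exact isMinOn_iff.1 hmin v hv
    · set d : ℝ := ‖z - horiz x‖ with hddef
      have hd_ge : a₀ * ‖z - x‖ ≤ d := not_lt.1 hcond
      have hzx2 : ‖z - x‖ ^ 2 = d ^ 2 + h ^ 2 := hnormzx z hz
      have hzxge : h ≤ ‖z - x‖ := by nlinarith [norm_nonneg (z - x), sq_nonneg d]
      have hdpos : 0 < d := lt_of_lt_of_le (mul_pos ha₀pos (lt_of_lt_of_le hhpos hzxge)) hd_ge
      set s : ℝ := h * a₀ / c with hsdef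
      have hspos : 0 < s := by positivity
      have hsd : s ≤ d := by
        have h1 : (a₀ * h) ^ 2 ≤ (c * d) ^ 2 := by
          nlinarith [mul_nonneg (sub_nonneg.2 hd_ge)
            (by positivity : (0:ℝ) ≤ d + a₀ * ‖z - x‖), hzx2, hc2]
        have h2 : a₀ * h ≤ c * d := by
          nlinarith [mul_pos hcpos hdpos, mul_pos ha₀pos hhpos]
        rw [hsdef, div_le_iff₀ hcpos]; linarith [h2]
      obtain ⟨w, hwdef⟩ : ∃ w : E3, w = horiz x + (s / d) • (z - horiz x) := ⟨_, rfl⟩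
      have hwplane : w ∈ plane := by
        show w 2 = 0
        have h1 := hdiff2 z hz
        rw [hwdef]
        simp [hh2, h1]
      have hwhoriz : w - horiz x = (s / d) • (z - horiz x) := by
        rw [hwdef]; abel
      have hwz : ‖w - z‖ = d - s := by
        have hrw : w - z = (s / d - 1) • (z - horiz x) := by
          rw [hwdef, sub_smul, one_smul]; abel
        rw [hrw, norm_smul, Real.norm_eq_abs, ← hddef,
          abs_of_nonpos (by rw [sub_nonpos, div_le_one hdpos]; exact hsd)]
        field_simp
        ring
      have hwx2 : ‖w - x‖ ^ 2 = s ^ 2 + h ^ 2 := by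
        rw [hnormzx w hwplane, hwhoriz, norm_smul, Real.norm_eq_abs, ← hddef,
          abs_of_nonneg (by positivity : (0:ℝ) ≤ s / d)]
        field_simp
      have hwx : ‖w - x‖ = h / c := by
        refine (pow_left_inj₀ (norm_nonneg _) (by positivity) two_ne_zero).1 ?_
        rw [hwx2, hsdef]
        field_simp
        linear_combination hc2
      -- the value of lt z in the evanescent case
      have hkey : h * c / Real.sqrt γm + s / Real.sqrt γp = (h / c) / Real.sqrt γm := by
        rw [hsdef, ← ha₀']
        field_simp
        linear_combination hc2
      have hval : lt z = ‖w - x‖ / Real.sqrt γm + (‖w - z‖ + ‖z - y‖) / Real.sqrt γp := by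
        rw [hlt z, if_neg hcond, habs, hwx, hwz]
        have hsplit : (d + ‖z - y‖) / Real.sqrt γp
            = s / Real.sqrt γp + (d - s + ‖z - y‖) / Real.sqrt γp := by ring
        rw [← hddef, hsplit]
        linarith [hkey]
      have htri : ‖w - y‖ ≤ ‖w - z‖ + ‖z - y‖ := by
        have hrw : w - y = (w - z) + (z - y) := by abel
        rw [hrw]; exact norm_add_le _ _
      have hchain : ltime γm γp x y w ≤ lt z := by
        rw [hval]
        simp only [ltime]
        gcongr
      have hminw : ltime γm γp x y zm ≤ ltime γm γp x y w := isMinOn_iff.1 hmin w hwplane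
      refine ⟨le_trans hminw hchain, ?_, ?_⟩
      · -- equality case
        intro heq
        have hwm : ltime γm γp x y w = ltime γm γp x y zm := le_antisymm (heq ▸ hchain) hminw
        have hweq : w = zm := by
          refine huniq w hwplane (isMinOn_iff.2 fun v hv => ?_)
          rw [hwm]; exact isMinOn_iff.1 hmin v hv
        -- triangle equality
        have htr_eq : ‖w - y‖ = ‖w - z‖ + ‖z - y‖ := by
          have h1 : lt z = ltime γm γp x y w := by rw [hwm, heq]
          rw [hval] at h1
          simp only [ltime] at h1
          have h2 : (‖w - z‖ + ‖z - y‖) / Real.sqrt γp = ‖w - y‖ / Real.sqrt γp := by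
            linarith
          field_simp [hsp.ne'] at h2
          linarith
        have hwb : Wbtw ℝ w z y := by
          rw [← dist_add_dist_eq_iff, dist_eq_norm, dist_eq_norm, dist_eq_norm]
          exact htr_eq.symm
        obtain ⟨a, b, hha, hhb, hab, hsum⟩ := hwb.mem_segment
        have hz2 : z 2 = 0 := hz
        have hcoord : a * (w 2) + b * (y 2) = 0 := by
          have := congrArg (fun v : E3 => v 2) hsum
          simpa [hz2] using this
        have hw2 : w 2 = 0 := hwplane
        have hb0 : b = 0 := by
          have hby : b * (y 2) = 0 := by rw [hw2] at hcoord; linarith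
          rcases mul_eq_zero.1 hby with h' | h'
          · exact h'
          · exact absurd h' hy.ne'
        have ha1 : a = 1 := by linarith
        have hzw : z = w := by
          rw [← hsum, hb0, ha1]; simp
        rw [hzw, hweq]
      · -- lt z ≤ ltime z
        intro _
        have hB : h * c + a₀ * d ≤ ‖z - x‖ := by
          nlinarith [hzx2, hc2, sq_nonneg (c * d - a₀ * h), norm_nonneg (z - x),
            mul_pos hhpos hcpos, mul_pos ha₀pos hdpos]
        have hval2 : lt z = (h * c + a₀ * d) / Real.sqrt γm + ‖z - y‖ / Real.sqrt γp := by
          rw [hlt z, if_neg hcond, habs, ← hddef]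
          have e2 : d / Real.sqrt γp = a₀ * d / Real.sqrt γm := by
            rw [div_eq_div_iff hsp.ne' hsm.ne']
            linear_combination (-d) * ha₀'
          have hsplit : (d + ‖z - y‖) / Real.sqrt γp
              = d / Real.sqrt γp + ‖z - y‖ / Real.sqrt γp := by ring
          rw [hsplit, e2]
          ring
        rw [hval2]
        simp only [ltime]
        gcongr
  have part2 : lt zm = ltime γm γp x y zm := by
    by_cases hc : ‖zm - horiz x‖ < a₀ * ‖zm - x‖
    · rw [hlt zm, if_pos hc]
    · exact le_antisymm ((main zm hzm).2.2 hc) (main zm hzm).1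
  refine ⟨isMinOn_iff.2 fun z hz => ?_, part2, fun z hz => (main z hz).2.1⟩
  rw [part2]
  exact (main z hz).1
end
end

section
/- Let γ₊ > γ₋ > 0, a₀ = √(γ₋/γ₊), and fix x ∈ ℝ³ with x₃ < 0 and z' ∈ ℝ² with |x' - z'| ≥ a₀|x - z̃'|. Let z₀' be on the segment x'z' with |x' - z₀'| = sin θ₀ |x - z̃₀'| and |x' - z'| = |x' - z₀'| + |z₀' - z'|, where sin θ₀ = a₀. Then |x₃| cos θ₀/√γ₋ + |x' - z'|/√γ₊ = |x - z̃₀'|/√γ₋ + |z₀' - z'|/√γ₊. -/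
open MeasureTheory Real

noncomputable section

local notation "E3" => EuclideanSpace ℝ (Fin 3)

/-- The evanescent-wave travel time `|x₃| cos θ₀/√γ₋ + |x' - z'|/√γ₊` equals the optical
length `|x - z̃₀'|/√γ₋ + |z₀' - z'|/√γ₊` of the path through the critical-angle point `z₀'`. -/
theorem stmt10 (γp γm : ℝ) (hγm : 0 < γm) (hγ : γm < γp)
    (a₀ : ℝ) (ha₀ : a₀ = Real.sqrt (γm / γp))
    (x z z₀ : E3) (hx : x 2 < 0) (hz : z 2 = 0) (hz₀ : z₀ 2 = 0)
    (hbig : a₀ * ‖z - x‖ ≤ ‖z - horiz x‖)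
    (hseg : z₀ ∈ segment ℝ (horiz x) z)
    (hcrit : ‖z₀ - horiz x‖ = a₀ * ‖z₀ - x‖)
    (hadd : ‖z - horiz x‖ = ‖z₀ - horiz x‖ + ‖z - z₀‖) :
    |x 2| * Real.sqrt (1 - a₀ ^ 2) / Real.sqrt γm + ‖z - horiz x‖ / Real.sqrt γp
      = ‖z₀ - x‖ / Real.sqrt γm + ‖z - z₀‖ / Real.sqrt γp := by
  have hγp : (0:ℝ) < γp := hγm.trans hγ
  have hsm : (0:ℝ) < Real.sqrt γm := Real.sqrt_pos.2 hγm
  have hsp : (0:ℝ) < Real.sqrt γp := Real.sqrt_pos.2 hγp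
  have ha' : a₀ = Real.sqrt γm / Real.sqrt γp := by
    rw [ha₀, Real.sqrt_div hγm.le]
  have ha2 : a₀ ^ 2 = γm / γp := by
    rw [ha₀, Real.sq_sqrt (by positivity)]
  have ha2lt : a₀ ^ 2 < 1 := by rw [ha2]; exact (div_lt_one hγp).2 hγ
  -- Pythagoras: ‖z₀ - x‖² = ‖z₀ - horiz x‖² + (x 2)²
  have hpyth : ‖z₀ - x‖ ^ 2 = ‖z₀ - horiz x‖ ^ 2 + (x 2) ^ 2 := by
    have h1 : ‖z₀ - x‖ ^ 2 = ∑ i, (z₀ i - x i) ^ 2 := by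
      rw [EuclideanSpace.norm_eq, Real.sq_sqrt (by positivity)]
      simp [sub_sq, sq_abs]
    have h2 : ‖z₀ - horiz x‖ ^ 2 = ∑ i, (z₀ i - horiz x i) ^ 2 := by
      rw [EuclideanSpace.norm_eq, Real.sq_sqrt (by positivity)]
      simp [sub_sq, sq_abs]
    rw [h1, h2, Fin.sum_univ_three, Fin.sum_univ_three]
    simp only [horiz, PiLp.sub_apply, PiLp.smul_apply, EuclideanSpace.single_apply,
      smul_eq_mul]
    norm_num [Fin.ext_iff, hz₀]
  -- hence (x 2)² = (1 - a₀²) ‖z₀ - x‖²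
  have hx2sq : (x 2) ^ 2 = (1 - a₀ ^ 2) * ‖z₀ - x‖ ^ 2 := by
    have := hpyth
    rw [hcrit, mul_pow] at this
    nlinarith [this]
  have hA : (0:ℝ) ≤ ‖z₀ - x‖ := norm_nonneg _
  have habs : |x 2| = Real.sqrt (1 - a₀ ^ 2) * ‖z₀ - x‖ := by
    rw [← Real.sqrt_sq_eq_abs, hx2sq, Real.sqrt_mul (by linarith), Real.sqrt_sq hA]
  have hsq1 : Real.sqrt (1 - a₀ ^ 2) * Real.sqrt (1 - a₀ ^ 2) = 1 - a₀ ^ 2 :=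
    Real.mul_self_sqrt (by linarith)
  have hmm : Real.sqrt γm * Real.sqrt γm = γm := Real.mul_self_sqrt hγm.le
  have hpp : Real.sqrt γp * Real.sqrt γp = γp := Real.mul_self_sqrt hγp.le
  have key : a₀ / Real.sqrt γp = a₀ ^ 2 / Real.sqrt γm := by
    rw [ha2, ha']
    field_simp
    linear_combination γp * hmm - γm * hpp
  rw [habs, hadd, hcrit]
  have e1 : Real.sqrt (1 - a₀ ^ 2) * ‖z₀ - x‖ * Real.sqrt (1 - a₀ ^ 2)
      = (1 - a₀ ^ 2) * ‖z₀ - x‖ := by linear_combination ‖z₀ - x‖ * hsq1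
  rw [e1]
  have h1 : a₀ * ‖z₀ - x‖ / Real.sqrt γp = a₀ ^ 2 * ‖z₀ - x‖ / Real.sqrt γm := by
    linear_combination ‖z₀ - x‖ * key
  rw [add_div, h1]
  ring
end
end

section
/- Let γ₊ > γ₋ > 0 with a₀ = √(γ₋/γ₊) < 1. For x ∈ ℝ³ with x₃ < 0 and z', z₀' ∈ ℝ² satisfying |x - z̃'|² = (|x - z̃₀'| + a₀|z₀' - z'|)² + x₃²|z' - z₀'|²/|x - z̃₀'|² with z' ≠ z₀', one has |x - z̃₀'|/√γ₋ + |z₀' - z'|/√γ₊ < |x - z̃'|/√γ₋. -/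
open MeasureTheory Real

noncomputable section

local notation "E3" => EuclideanSpace ℝ (Fin 3)

/-- The evanescent path is strictly shorter in optical length than the direct path. -/
theorem stmt11 (γp γm : ℝ) (hγm : 0 < γm) (hγ : γm < γp)
    (a₀ : ℝ) (ha₀ : a₀ = Real.sqrt (γm / γp))
    (x z z₀ : E3) (hx : x 2 < 0) (hz : z 2 = 0) (hz₀ : z₀ 2 = 0)
    (hne : z ≠ z₀)
    (hiden : ‖z - x‖ ^ 2 = (‖z₀ - x‖ + a₀ * ‖z - z₀‖) ^ 2
        + (x 2) ^ 2 * ‖z - z₀‖ ^ 2 / ‖z₀ - x‖ ^ 2) :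
    ‖z₀ - x‖ / Real.sqrt γm + ‖z - z₀‖ / Real.sqrt γp < ‖z - x‖ / Real.sqrt γm := by
  have hγp : 0 < γp := hγm.trans hγ
  have hsm : 0 < Real.sqrt γm := Real.sqrt_pos.2 hγm
  have hsp : 0 < Real.sqrt γp := Real.sqrt_pos.2 hγp
  have hA : 0 < ‖z₀ - x‖ := by
    rw [norm_sub_pos_iff]
    intro h; rw [h] at hz₀; linarith
  have hL : 0 < ‖z - z₀‖ := by rw [norm_sub_pos_iff]; exact hne
  have hx2 : 0 < (x 2) ^ 2 := pow_two_pos_of_ne_zero (ne_of_lt hx)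
  have ha₀nn : 0 ≤ a₀ := ha₀ ▸ Real.sqrt_nonneg _
  have key : ‖z₀ - x‖ + a₀ * ‖z - z₀‖ < ‖z - x‖ := by
    have hlt : (‖z₀ - x‖ + a₀ * ‖z - z₀‖) ^ 2 < ‖z - x‖ ^ 2 := by
      have hpos : 0 < (x 2) ^ 2 * ‖z - z₀‖ ^ 2 / ‖z₀ - x‖ ^ 2 := by positivity
      linarith [hiden]
    nlinarith [norm_nonneg (z - x)]
  have ha : a₀ = Real.sqrt γm / Real.sqrt γp := by
    rw [ha₀, Real.sqrt_div hγm.le]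
  have hrw : ‖z - z₀‖ / Real.sqrt γp = a₀ * ‖z - z₀‖ / Real.sqrt γm := by
    rw [ha]; field_simp
  rw [hrw, ← add_div]
  gcongr
end
end

section
/- Let D ⊂ ℝ³ be bounded and B ⊂ ℝ³ open bounded with D̄ ∩ B̄ = ∅. Let f ∈ L²(ℝ³) with supp f ⊂ B̄ and |f| ≤ M. Let v(x;τ) = (1/4π) ∫_B e^{-τ|x-y|}/|x-y| f(y) dy. Then there exists C > 0 such that for all τ ≥ 1, ‖∇v(·;τ)‖²_{L²(D)} ≤ C τ² e^{-2τ dist(D,B)}. -/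
open MeasureTheory Real

noncomputable section

local notation "E3" => EuclideanSpace ℝ (Fin 3)

lemma kernel_diff_bound {τ a r₁ r₂ : ℝ} (hτ : 0 < τ) (ha : 0 < a)
    (h₁ : a ≤ r₁) (h₂ : a ≤ r₂) :
    |Real.exp (-τ * r₁) / r₁ - Real.exp (-τ * r₂) / r₂|
      ≤ (Real.exp (-τ * a) * (τ / a + 1 / a ^ 2)) * |r₁ - r₂| := by
  have key := Convex.norm_image_sub_le_of_norm_deriv_le
    (f := fun r : ℝ => Real.exp (-τ * r) / r)
    (C := Real.exp (-τ * a) * (τ / a + 1 / a ^ 2)) (s := Set.Ici a)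
    (fun r hr => by
      have hr0 : r ≠ 0 := ne_of_gt (lt_of_lt_of_le ha hr)
      exact (((differentiableAt_id.const_mul (-τ)).exp).div differentiableAt_id hr0))
    (fun r hr => by
      have hra : a ≤ r := hr
      have hr0 : (0:ℝ) < r := lt_of_lt_of_le ha hra
      have hd : HasDerivAt (fun r : ℝ => Real.exp (-τ * r) / r)
          ((Real.exp (-τ * r) * (-τ * 1) * r - Real.exp (-τ * r) * 1) / r ^ 2) r := by
        exact (((hasDerivAt_id r).const_mul (-τ)).exp).div (hasDerivAt_id r) (ne_of_gt hr0)
      rw [hd.deriv]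
      have heq : (Real.exp (-τ * r) * (-τ * 1) * r - Real.exp (-τ * r) * 1) / r ^ 2
          = -(Real.exp (-τ * r) * (τ / r + 1 / r ^ 2)) := by
        field_simp
        ring
      rw [Real.norm_eq_abs, heq, abs_neg, abs_of_nonneg (by positivity)]
      have h1 : Real.exp (-τ * r) ≤ Real.exp (-τ * a) := by
        apply Real.exp_le_exp.2
        nlinarith
      have h2 : τ / r ≤ τ / a := div_le_div_of_nonneg_left hτ.le ha hra
      have h3 : 1 / r ^ 2 ≤ 1 / a ^ 2 :=
        one_div_le_one_div_of_le (by positivity) (by nlinarith)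
      exact mul_le_mul h1 (add_le_add h2 h3) (by positivity) (Real.exp_nonneg _))
    (convex_Ici a) h₂ h₁
  simpa [Real.norm_eq_abs, abs_sub_comm] using key

/-- `setDist D B = inf_{x ∈ D, y ∈ B} |x - y|`. -/
def setDist (D B : Set E3) : ℝ := sInf (Set.image2 dist D B)

set_option maxHeartbeats 1000000 in
theorem stmt12 (D B : Set E3) (hD : Bornology.IsBounded D)
    (hBo : IsOpen B) (hBb : Bornology.IsBounded B)
    (hdisj : closure D ∩ closure B = ∅)
    (f : E3 → ℝ) (hf : MemLp f 2 volume) (hsupp : Function.support f ⊆ closure B)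
    (M : ℝ) (hM : ∀ x, |f x| ≤ M) :
    ∃ C > 0, ∀ τ : ℝ, 1 ≤ τ →
      (∫ x in D, ‖fderiv ℝ
          (fun x' : E3 => (4 * π)⁻¹ * ∫ y in B, Real.exp (-τ * ‖x' - y‖) / ‖x' - y‖ * f y) x‖ ^ 2)
        ≤ C * τ ^ 2 * Real.exp (-2 * τ * setDist D B) := by
  rcases Set.eq_empty_or_nonempty B with hB | hBne
  · refine ⟨1, one_pos, fun τ hτ => ?_⟩
    have hzero : (fun x' : E3 => (4 * π)⁻¹ *
        ∫ y in B, Real.exp (-τ * ‖x' - y‖) / ‖x' - y‖ * f y) = fun _ => 0 := by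
      funext x'; rw [hB]; simp
    rw [hzero]
    have : (fun x : E3 => ‖fderiv ℝ (fun _ : E3 => (0:ℝ)) x‖ ^ 2) = fun _ => 0 := by
      funext x; simp
    rw [this]
    simp only [integral_zero]
    positivity
  rcases Set.eq_empty_or_nonempty D with hDe | hDne
  · refine ⟨1, one_pos, fun τ hτ => ?_⟩
    rw [hDe]
    simp only [Measure.restrict_empty, integral_zero_measure]
    positivity
  -- main case
  set d := setDist D B with hd
  have hbdd : BddBelow (Set.image2 dist D B) := by
    refine ⟨0, fun z hz => ?_⟩
    obtain ⟨x, hx, y, hy, rfl⟩ := hz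
    exact dist_nonneg
  have hdle : ∀ x ∈ D, ∀ y ∈ B, d ≤ dist x y := fun x hx y hy =>
    csInf_le hbdd (Set.mem_image2_of_mem hx hy)
  have hdpos : 0 < d := by
    have hKD : IsCompact (closure D) := hD.isCompact_closure
    have hcont : Continuous fun x : E3 => Metric.infDist x (closure B) :=
      Metric.continuous_infDist_pt _
    obtain ⟨x₀, hx₀, hmin⟩ := hKD.exists_isMinOn hDne.closure hcont.continuousOn
    have hx₀nB : x₀ ∉ closure B := by
      intro h
      have : x₀ ∈ closure D ∩ closure B := ⟨hx₀, h⟩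
      rw [hdisj] at this
      exact this
    have hpos : 0 < Metric.infDist x₀ (closure B) :=
      (IsClosed.notMem_iff_infDist_pos isClosed_closure hBne.closure).1 hx₀nB
    refine lt_of_lt_of_le hpos (le_csInf (hDne.image2 hBne) ?_)
    rintro z ⟨x, hx, y, hy, rfl⟩
    exact le_trans (hmin (subset_closure hx)) (Metric.infDist_le_dist_of_mem (subset_closure hy))
  have hM0 : 0 ≤ M := le_trans (abs_nonneg _) (hM 0)
  have hBfin : volume B ≠ ⊤ := hBb.measure_lt_top.ne
  have hDfin : volume D ≠ ⊤ := hD.measure_lt_top.ne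
  set A : ℝ := (4 * π)⁻¹ * (Real.exp 1 * (2 / d + 4 / d ^ 2)) * M * (volume B).toReal with hA
  have hA0 : 0 ≤ A := by
    have := Real.pi_pos
    positivity
  refine ⟨A ^ 2 * (volume D).toReal + 1, by positivity, fun τ hτ => ?_⟩
  have hτ0 : 0 < τ := lt_of_lt_of_le one_pos hτ
  set ε : ℝ := min (d / 2) (1 / τ) with hε
  have hεpos : 0 < ε := lt_min (by linarith) (by positivity)
  set a : ℝ := d - ε with ha'
  have hage : d / 2 ≤ a := by
    have : ε ≤ d / 2 := min_le_left _ _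
    simp only [ha']; linarith
  have ha : 0 < a := lt_of_lt_of_le (by linarith) hage
  set L : ℝ := Real.exp (-τ * a) * (τ / a + 1 / a ^ 2) with hL
  set K : ℝ := (4 * π)⁻¹ * L * M * (volume B).toReal with hK
  have hπ : (0:ℝ) < (4 * π)⁻¹ := by have := Real.pi_pos; positivity
  have hL0 : 0 ≤ L := by positivity
  have hK0 : 0 ≤ K := by positivity
  -- K ≤ A * (τ * exp (-τ d))
  have hK_le : K ≤ A * (τ * Real.exp (-τ * d)) := by
    have hτε : τ * ε ≤ 1 := by
      have h1 : ε ≤ 1 / τ := min_le_right _ _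
      calc τ * ε ≤ τ * (1 / τ) := by nlinarith
        _ = 1 := by field_simp
    have e1 : Real.exp (-τ * a) ≤ Real.exp 1 * Real.exp (-τ * d) := by
      rw [← Real.exp_add]
      apply Real.exp_le_exp.2
      simp only [ha']
      nlinarith
    have e2 : τ / a + 1 / a ^ 2 ≤ τ * (2 / d + 4 / d ^ 2) := by
      have hd2 : (0:ℝ) < d / 2 := by linarith
      have t1 : τ / a ≤ τ / (d / 2) := div_le_div_of_nonneg_left hτ0.le hd2 hage
      have t1' : τ / (d / 2) = τ * (2 / d) := by rw [div_div_eq_mul_div, mul_div_assoc]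
      have t2 : 1 / a ^ 2 ≤ 1 / (d / 2) ^ 2 :=
        one_div_le_one_div_of_le (by positivity) (by nlinarith)
      have t2' : 1 / (d / 2) ^ 2 = 4 / d ^ 2 := by field_simp; ring
      have t3 : 4 / d ^ 2 ≤ τ * (4 / d ^ 2) := by nlinarith [div_nonneg (by norm_num : (0:ℝ) ≤ 4) (sq_nonneg d)]
      have : τ * (2 / d + 4 / d ^ 2) = τ * (2 / d) + τ * (4 / d ^ 2) := by ring
      rw [this]
      calc τ / a + 1 / a ^ 2 ≤ τ * (2 / d) + 4 / d ^ 2 := by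
            linarith [t1.trans t1'.le, t2.trans t2'.le]
        _ ≤ τ * (2 / d) + τ * (4 / d ^ 2) := by linarith
    have eL : L ≤ (Real.exp 1 * Real.exp (-τ * d)) * (τ * (2 / d + 4 / d ^ 2)) :=
      mul_le_mul e1 e2 (by positivity) (by positivity)
    calc K = (4 * π)⁻¹ * L * M * (volume B).toReal := hK
      _ ≤ (4 * π)⁻¹ * ((Real.exp 1 * Real.exp (-τ * d)) * (τ * (2 / d + 4 / d ^ 2))) * M
            * (volume B).toReal := by
          apply mul_le_mul_of_nonneg_right _ ENNReal.toReal_nonneg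
          apply mul_le_mul_of_nonneg_right _ hM0
          exact mul_le_mul_of_nonneg_left eL hπ.le
      _ = A * (τ * Real.exp (-τ * d)) := by rw [hA]; ring
  -- closed superset of D on which the distance bound holds
  set S : Set (EuclideanSpace ℝ (Fin 3)) := {x | ∀ y ∈ B, d ≤ dist x y} with hS
  have hSclosed : IsClosed S := by
    have hSeq : S = ⋂ y ∈ B, {x : EuclideanSpace ℝ (Fin 3) | d ≤ dist x y} := by
      ext x; simp [hS]
    rw [hSeq]
    exact isClosed_biInter fun y _ =>
      isClosed_le continuous_const (continuous_id.dist continuous_const)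
  have hDS : D ⊆ S := fun x hx y hy => hdle x hx y hy
  -- integrability of the kernel
  have hker_int : ∀ z : EuclideanSpace ℝ (Fin 3), (∀ y ∈ B, a ≤ ‖z - y‖) →
      IntegrableOn (fun y => Real.exp (-τ * ‖z - y‖) / ‖z - y‖ * f y) B volume := by
    intro z hz
    have hmeas : AEStronglyMeasurable
        (fun y : EuclideanSpace ℝ (Fin 3) => Real.exp (-τ * ‖z - y‖) / ‖z - y‖ * f y)
        (volume.restrict B) := by
      apply AEStronglyMeasurable.mul
      · refine ContinuousOn.aestronglyMeasurable ?_ hBo.measurableSet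
        apply ContinuousOn.div
        · exact (Real.continuous_exp.comp
            (continuous_const.mul (continuous_const.sub continuous_id).norm)).continuousOn
        · exact ((continuous_const.sub continuous_id).norm).continuousOn
        · exact fun y hy => ne_of_gt (lt_of_lt_of_le ha (hz y hy))
      · exact hf.aestronglyMeasurable.restrict
    refine Integrable.mono' (g := fun _ => 1 / a * M)
      (integrableOn_const hBb.measure_lt_top.ne) hmeas ?_
    filter_upwards [ae_restrict_mem hBo.measurableSet] with y hy
    have hzy : a ≤ ‖z - y‖ := hz y hy
    have h1 : Real.exp (-τ * ‖z - y‖) ≤ 1 := by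
      rw [Real.exp_le_one_iff]
      nlinarith [norm_nonneg (z - y)]
    have h2 : Real.exp (-τ * ‖z - y‖) / ‖z - y‖ ≤ 1 / a := div_le_div₀ zero_le_one h1 ha hzy
    rw [norm_mul, Real.norm_eq_abs, Real.norm_eq_abs, abs_of_nonneg (by positivity)]
    exact mul_le_mul h2 (hM y) (abs_nonneg _) (by positivity)
  -- pointwise gradient bound on S
  have hpt : ∀ x ∈ S, ‖fderiv ℝ
      (fun x' : EuclideanSpace ℝ (Fin 3) =>
        (4 * π)⁻¹ * ∫ y in B, Real.exp (-τ * ‖x' - y‖) / ‖x' - y‖ * f y) x‖ ≤ K := by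
    intro x hx
    have hball : ∀ z ∈ Metric.ball x ε, ∀ y ∈ B, a ≤ ‖z - y‖ := by
      intro z hz y hy
      have h1 : d ≤ ‖x - y‖ := by rw [← dist_eq_norm]; exact hx y hy
      have h2 : ‖x - z‖ < ε := by rw [← dist_eq_norm]; exact Metric.mem_ball'.1 hz
      have h3 : ‖x - y‖ ≤ ‖x - z‖ + ‖z - y‖ := by
        calc ‖x - y‖ = ‖x - z + (z - y)‖ := by congr 1; abel
          _ ≤ ‖x - z‖ + ‖z - y‖ := norm_add_le _ _
      simp only [ha']
      linarith
    have hlip : LipschitzOnWith K.toNNReal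
        (fun x' : EuclideanSpace ℝ (Fin 3) =>
          (4 * π)⁻¹ * ∫ y in B, Real.exp (-τ * ‖x' - y‖) / ‖x' - y‖ * f y)
        (Metric.ball x ε) := by
      rw [lipschitzOnWith_iff_norm_sub_le]
      intro z₁ hz₁ z₂ hz₂
      rw [Real.coe_toNNReal K hK0]
      have hz₁' := hball z₁ hz₁
      have hz₂' := hball z₂ hz₂
      have hi₁ := hker_int z₁ hz₁'
      have hi₂ := hker_int z₂ hz₂'
      have hkey : ∀ y ∈ B,
          ‖Real.exp (-τ * ‖z₁ - y‖) / ‖z₁ - y‖ * f y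
            - Real.exp (-τ * ‖z₂ - y‖) / ‖z₂ - y‖ * f y‖ ≤ L * ‖z₁ - z₂‖ * M := by
        intro y hy
        have hker := kernel_diff_bound hτ0 ha (hz₁' y hy) (hz₂' y hy)
        have hr : |‖z₁ - y‖ - ‖z₂ - y‖| ≤ ‖z₁ - z₂‖ := by
          have h := abs_norm_sub_norm_le (z₁ - y) (z₂ - y)
          have heq : z₁ - y - (z₂ - y) = z₁ - z₂ := by abel
          rwa [heq] at h
        rw [← sub_mul, norm_mul, Real.norm_eq_abs, Real.norm_eq_abs]
        calc |Real.exp (-τ * ‖z₁ - y‖) / ‖z₁ - y‖ - Real.exp (-τ * ‖z₂ - y‖) / ‖z₂ - y‖| * |f y|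
            ≤ L * |‖z₁ - y‖ - ‖z₂ - y‖| * M :=
              mul_le_mul hker (hM y) (abs_nonneg _) (by positivity)
          _ ≤ L * ‖z₁ - z₂‖ * M := by nlinarith [mul_le_mul_of_nonneg_left hr hL0]
      have hsub : (∫ y in B, Real.exp (-τ * ‖z₁ - y‖) / ‖z₁ - y‖ * f y)
          - (∫ y in B, Real.exp (-τ * ‖z₂ - y‖) / ‖z₂ - y‖ * f y)
          = ∫ y in B, (Real.exp (-τ * ‖z₁ - y‖) / ‖z₁ - y‖ * f y
              - Real.exp (-τ * ‖z₂ - y‖) / ‖z₂ - y‖ * f y) := (integral_sub hi₁ hi₂).symm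
      have hbnd : ‖∫ y in B, (Real.exp (-τ * ‖z₁ - y‖) / ‖z₁ - y‖ * f y
            - Real.exp (-τ * ‖z₂ - y‖) / ‖z₂ - y‖ * f y)‖
          ≤ L * ‖z₁ - z₂‖ * M * (volume B).toReal := by
        refine le_trans (norm_integral_le_of_norm_le
          (g := fun _ => L * ‖z₁ - z₂‖ * M)
          (integrableOn_const hBb.measure_lt_top.ne) ?_) ?_
        · filter_upwards [ae_restrict_mem hBo.measurableSet] with y hy
          exact hkey y hy
        · rw [setIntegral_const, smul_eq_mul]
          exact le_of_eq (mul_comm _ _)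
      calc ‖(4 * π)⁻¹ * (∫ y in B, Real.exp (-τ * ‖z₁ - y‖) / ‖z₁ - y‖ * f y)
            - (4 * π)⁻¹ * (∫ y in B, Real.exp (-τ * ‖z₂ - y‖) / ‖z₂ - y‖ * f y)‖
          = (4 * π)⁻¹ * ‖(∫ y in B, Real.exp (-τ * ‖z₁ - y‖) / ‖z₁ - y‖ * f y)
              - (∫ y in B, Real.exp (-τ * ‖z₂ - y‖) / ‖z₂ - y‖ * f y)‖ := by
            rw [← mul_sub, norm_mul, Real.norm_eq_abs, Real.norm_eq_abs, abs_of_pos hπ]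
        _ ≤ (4 * π)⁻¹ * (L * ‖z₁ - z₂‖ * M * (volume B).toReal) := by
            rw [hsub]
            exact mul_le_mul_of_nonneg_left hbnd hπ.le
        _ = K * ‖z₁ - z₂‖ := by rw [hK]; ring
    have hres := norm_fderiv_le_of_lipschitzOn ℝ (Metric.ball_mem_nhds x hεpos) hlip
    rwa [Real.coe_toNNReal K hK0] at hres
  -- integrate
  by_cases hInt : IntegrableOn (fun x => ‖fderiv ℝ
      (fun x' : EuclideanSpace ℝ (Fin 3) =>
        (4 * π)⁻¹ * ∫ y in B, Real.exp (-τ * ‖x' - y‖) / ‖x' - y‖ * f y) x‖ ^ 2) D volume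
  · have hcstint : IntegrableOn (fun _ : EuclideanSpace ℝ (Fin 3) =>
        (A * (τ * Real.exp (-τ * d))) ^ 2) D volume :=
      integrableOn_const hD.measure_lt_top.ne
    have hae : ∀ᵐ x ∂(volume.restrict D), ‖fderiv ℝ
        (fun x' : EuclideanSpace ℝ (Fin 3) =>
          (4 * π)⁻¹ * ∫ y in B, Real.exp (-τ * ‖x' - y‖) / ‖x' - y‖ * f y) x‖ ^ 2
        ≤ (A * (τ * Real.exp (-τ * d))) ^ 2 := by
      refine ae_mono (Measure.restrict_mono hDS le_rfl) ?_
      refine (ae_restrict_iff' hSclosed.measurableSet).2 (Filter.Eventually.of_forall ?_)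
      intro x hx
      exact pow_le_pow_left₀ (norm_nonneg _) ((hpt x hx).trans hK_le) 2
    have hexp2 : Real.exp (-τ * d) ^ 2 = Real.exp (-2 * τ * d) := by
      rw [sq, ← Real.exp_add]
      ring_nf
    calc (∫ x in D, ‖fderiv ℝ
          (fun x' : EuclideanSpace ℝ (Fin 3) =>
            (4 * π)⁻¹ * ∫ y in B, Real.exp (-τ * ‖x' - y‖) / ‖x' - y‖ * f y) x‖ ^ 2)
        ≤ ∫ _x in D, (A * (τ * Real.exp (-τ * d))) ^ 2 := integral_mono_ae hInt hcstint hae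
      _ = (volume D).toReal * (A * (τ * Real.exp (-τ * d))) ^ 2 := by
          rw [setIntegral_const, smul_eq_mul]; rfl
      _ = A ^ 2 * (volume D).toReal * τ ^ 2 * Real.exp (-2 * τ * d) := by
          rw [← hexp2]; ring
      _ ≤ (A ^ 2 * (volume D).toReal + 1) * τ ^ 2 * Real.exp (-2 * τ * d) := by
          have h1 : (0:ℝ) < Real.exp (-2 * τ * d) := Real.exp_pos _
          nlinarith [sq_nonneg τ, Real.exp_pos (-2 * τ * d)]
  · rw [integral_undef hInt]
    positivity
end
end
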